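/- Let N ≥ 2 and let f = Σ_{j=0}^{N} α_j T_j satisfy f'(-1) = f'(1) = 0. Define p_j = (j-2)^2/j^2 for j ≥ 2, β_0 = α_0, β_1 = α_1, and β_j = p_j β_{j-2} + α_j for 2 ≤ j ≤ N-2. Then f = Σ_{j=0}^{N-2} β_j φ_j where φ_j = T_j - (j^2/(j+2)^2) T_{j+2}. -/

import Mathlib

/-!
Put `s j = j ^ 2 * β j`. The recurrence for `β` reads `s (j + 2) = s j + (j + 2) ^ 2 * α (j + 2)`, so
once it is continued up to `j = N`, the values `s (N - 1)` and `s N` are the sums of `j ^ 2 * α j` over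
the indices `j ≤ N` of either parity. As `T_j'(±1) = (±1) ^ (j - 1) * j ^ 2`, the conditions
`f'(1) = f'(-1) = 0` say that these two sums have zero sum and zero difference, hence
`β (N - 1) = β N = 0`. On the other hand `∑ β j φ_j` telescopes to
`∑ α j T_j - β (N - 1) T_(N-1) - β N T_N`.
-/
open Polynomial Polynomial.Chebyshev Finset

namespace Polynomial.Chebyshev

theorem derivative_T_eval_neg_one {R : Type*} [CommRing R] (n : ℕ) :
    (derivative (T R n)).eval (-1) = (-1) ^ (n + 1) * (n : R) ^ 2 := by
  rw [T_derivative_eq_U, eval_mul, eval_intCast, U_eval_neg_one]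
  cases n with
  | zero => simp
  | succ n =>
    simp only [Nat.cast_succ, add_sub_cancel_right, Int.negOnePow_def, zpow_natCast]
    push_cast
    ring

variable {R : Type*} [CommRing R]

theorem derivative_sum_C_mul_T_eval_one (a : ℕ → R) (n : ℕ) :
    (derivative (∑ k ∈ range n, Polynomial.C (a k) * T R k)).eval 1 =
      ∑ k ∈ range n, (k : R) ^ 2 * a k := by
  simp [eval_finsetSum, derivative_T_eval_one, mul_comm]

theorem derivative_sum_C_mul_T_eval_neg_one (a : ℕ → R) (n : ℕ) :
    (derivative (∑ k ∈ range n, Polynomial.C (a k) * T R k)).eval (-1) =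
      -∑ k ∈ range n, (-1) ^ k * ((k : R) ^ 2 * a k) := by
  simp only [derivative_sum, eval_finsetSum, derivative_C_mul, eval_mul, eval_C,
    derivative_T_eval_neg_one, ← sum_neg_distrib]
  refine sum_congr rfl fun k _ => ?_
  ring

end Polynomial.Chebyshev

theorem sum_range_pow_mul_eq_of_sq_eq_one {R : Type*} [CommRing R] {x : R} (hx : x ^ 2 = 1)
    {c s : ℕ → R} (h0 : s 0 = c 0) (h1 : s 1 = c 1) (hs : ∀ n, s (n + 2) = s n + c (n + 2))
    (n : ℕ) : ∑ k ∈ range (n + 2), x ^ k * c k = x ^ n * s n + x ^ (n + 1) * s (n + 1) := by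
  induction n with
  | zero => simp [sum_range_succ, h0, h1]
  | succ n ih =>
    rw [sum_range_succ, ih, hs]
    linear_combination (-(x ^ n * s n)) * hx

theorem sum_range_smul_sub_smul_add_two {R V : Type*} [CommRing R] [AddCommGroup V] [Module R V]
    (P : ℕ → V) {a b r : ℕ → R} (h0 : b 0 = a 0) (h1 : b 1 = a 1)
    (hb : ∀ n, b (n + 2) = r n * b n + a (n + 2)) (M : ℕ) :
    ∑ j ∈ range (M + 1), b j • (P j - r j • P (j + 2)) =
      ∑ k ∈ range (M + 3), a k • P k - b (M + 1) • P (M + 1) - b (M + 2) • P (M + 2) := by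
  induction M with
  | zero => simp [sum_range_succ, h0, h1, hb 0]; module
  | succ M ih =>
    rw [sum_range_succ, ih, sum_range_succ _ (M + 3), hb (M + 1)]
    module

section NeumannCoeff

variable {K : Type*} [Field K]

/-- The coefficients `β` of the statement, with the recurrence continued past `N - 2`. -/
def neumannCoeff (α : ℕ → K) : ℕ → K
  | 0 => α 0
  | 1 => α 1
  | n + 2 => (n : K) ^ 2 / ((n : K) + 2) ^ 2 * neumannCoeff α n + α (n + 2)

theorem sq_mul_neumannCoeff_add_two [CharZero K] (α : ℕ → K) (n : ℕ) :
    ((n + 2 : ℕ) : K) ^ 2 * neumannCoeff α (n + 2) =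
      (n : K) ^ 2 * neumannCoeff α n + ((n + 2 : ℕ) : K) ^ 2 * α (n + 2) := by
  have hn : (n : K) + 2 ≠ 0 := by exact_mod_cast (n + 1).succ_ne_zero
  simp only [neumannCoeff]
  push_cast
  field_simp

theorem eq_neumannCoeff_of_recurrence {α β : ℕ → K} {M : ℕ} (hβ0 : β 0 = α 0) (hβ1 : β 1 = α 1)
    (hβ : ∀ j, 2 ≤ j → j ≤ M → β j = ((j : K) - 2) ^ 2 / (j : K) ^ 2 * β (j - 2) + α j) :
    ∀ j ≤ M, β j = neumannCoeff α j := by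
  intro j
  induction j using Nat.twoStepInduction with
  | zero => exact fun _ => hβ0
  | one => exact fun _ => hβ1
  | more n ih _ =>
    intro hn
    rw [hβ (n + 2) (by omega) hn, Nat.add_sub_cancel, ih (by omega), neumannCoeff]
    push_cast
    ring

theorem neumannCoeff_eq_zero_of_derivative_eval_eq_zero [CharZero K] {α : ℕ → K} {M : ℕ}
    (hbc : (derivative (∑ k ∈ range (M + 3), Polynomial.C (α k) * T K k)).eval (-1) = 0 ∧
      (derivative (∑ k ∈ range (M + 3), Polynomial.C (α k) * T K k)).eval 1 = 0) :
    neumannCoeff α (M + 1) = 0 ∧ neumannCoeff α (M + 2) = 0 := by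
  set s : ℕ → K := fun k => (k : K) ^ 2 * neumannCoeff α k
  have hsum {x : K} (hx : x ^ 2 = 1) :
      ∑ k ∈ range (M + 3), x ^ k * ((k : K) ^ 2 * α k) =
        x ^ (M + 1) * s (M + 1) + x ^ (M + 2) * s (M + 2) :=
    sum_range_pow_mul_eq_of_sq_eq_one hx (by simp [s]) (by simp [s, neumannCoeff])
      (sq_mul_neumannCoeff_add_two α) (M + 1)
  rw [derivative_sum_C_mul_T_eval_neg_one, derivative_sum_C_mul_T_eval_one] at hbc
  have hplus := hsum (x := 1) (by norm_num)
  have hminus := hsum (x := -1) (by norm_num)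
  simp only [one_pow, one_mul] at hplus
  have hs_sum : s (M + 1) + s (M + 2) = 0 := hplus ▸ hbc.2
  have hsign : ((-1 : K) ^ (M + 1)) ^ 2 = 1 := by rw [← pow_mul, mul_comm, pow_mul]; norm_num
  have hs_diff : s (M + 1) - s (M + 2) = 0 := by
    linear_combination (-(-1 : K) ^ (M + 1)) * (hminus + hbc.1) - (s (M + 1) - s (M + 2)) * hsign
  have hs1 : s (M + 1) = 0 := by linear_combination (hs_sum + hs_diff) / 2
  have hs2 : s (M + 2) = 0 := by linear_combination (hs_sum - hs_diff) / 2
  simp only [s, mul_eq_zero, pow_eq_zero_iff two_ne_zero, Nat.cast_eq_zero] at hs1 hs2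
  exact ⟨hs1.resolve_left M.succ_ne_zero, hs2.resolve_left (M + 1).succ_ne_zero⟩

end NeumannCoeff

theorem forward_neumann_compacting (N : ℕ) (hN : 2 ≤ N) (α β : ℕ → ℝ)
    (f : Polynomial ℝ)
    (hf : f = ∑ j ∈ Finset.range (N + 1), Polynomial.C (α j) * Chebyshev.T ℝ j)
    (hbc : (Polynomial.derivative f).eval (-1) = 0 ∧ (Polynomial.derivative f).eval 1 = 0)
    (hβ0 : β 0 = α 0) (hβ1 : β 1 = α 1)
    (hβ : ∀ j, 2 ≤ j → j ≤ N - 2 →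
      β j = (((j : ℝ) - 2) ^ 2 / (j : ℝ) ^ 2) * β (j - 2) + α j) :
    f = ∑ j ∈ Finset.range (N - 1),
        Polynomial.C (β j) *
          (Chebyshev.T ℝ j - Polynomial.C ((j : ℝ) ^ 2 / ((j : ℝ) + 2) ^ 2)
            * Chebyshev.T ℝ (j + 2)) := by
  obtain ⟨M, rfl⟩ : ∃ M, N = M + 2 := ⟨N - 2, by omega⟩
  subst hf
  have hβb := eq_neumannCoeff_of_recurrence (M := M) hβ0 hβ1 fun j h2 hj => hβ j h2 (by omega)
  obtain ⟨htop1, htop2⟩ := neumannCoeff_eq_zero_of_derivative_eval_eq_zero hbc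
  have hcompact := sum_range_smul_sub_smul_add_two (fun k => T ℝ k) (a := α) (b := neumannCoeff α)
    (r := fun n => (n : ℝ) ^ 2 / ((n : ℝ) + 2) ^ 2) rfl rfl (fun _ => rfl) M
  simp only [htop1, htop2, zero_smul, sub_zero, smul_eq_C_mul] at hcompact
  rw [show M + 2 - 1 = M + 1 from rfl, ← hcompact]
  refine sum_congr rfl fun j hj => ?_
  rw [hβb j (by simpa [Nat.lt_succ_iff] using hj)]
  norm_cast
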